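/- arXiv:0709.2473 — 2 statements merged into one kernel-verified Lean document; each statement's English description precedes it below -/
import Mathlib

section
/- Let P_N be the reversal matrix on C^{|N|} built from blocks and Δ_N = Δ_{n₁} ⊕ ··· ⊕ Δ_{n_k}. Then the *cosquare D_N := Δ_N⁻*Δ_N satisfies D_N = (I - iJ_N)⁻¹(I + iJ_N) = I + 2iJ_N + 2i²J_N² + 2i³J_N³ + ···, where J_N = J_{n₁}(0) ⊕ ··· ⊕ J_{n_k}(0). In particular D_N is a polynomial in J_N, and J_N = i(I - D_N)(I + D_N)⁻¹ is a polynomial in D_N. -/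
open Matrix

def JBlock (n : ℕ) (μ : ℂ) : Matrix (Fin n) (Fin n) ℂ :=
  Matrix.of fun i j => if i = j then μ else if (i : ℕ) + 1 = (j : ℕ) then 1 else 0

def Delta (n : ℕ) : Matrix (Fin n) (Fin n) ℂ :=
  Matrix.of fun i j =>
    if (i : ℕ) + (j : ℕ) = n - 1 then 1
    else if (i : ℕ) + (j : ℕ) = n then Complex.I
    else 0

/-- `J_N = J_{n₁}(0) ⊕ ⋯ ⊕ J_{n_k}(0)`. -/
noncomputable def JN {k : ℕ} (N : Fin k → ℕ) :
    Matrix (Σ i, Fin (N i)) (Σ i, Fin (N i)) ℂ :=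
  Matrix.blockDiagonal' fun i => JBlock (N i) 0

/-- `Δ_N = Δ_{n₁} ⊕ ⋯ ⊕ Δ_{n_k}`. -/
noncomputable def DeltaN {k : ℕ} (N : Fin k → ℕ) :
    Matrix (Σ i, Fin (N i)) (Σ i, Fin (N i)) ℂ :=
  Matrix.blockDiagonal' fun i => Delta (N i)

/-! Both `Δ_n = P_n (I + iJ_n)` and `Δ_nᴴ = P_n (I - iJ_n)` with the involution `P_n`, so the
*cosquare of `Δ_N` is the Cayley transform `D = (I - x)⁻¹(I + x)` of the nilpotent matrix
`x = iJ_N`. The geometric series for `(I - x)⁻¹` gives the expansion of `D`; the identities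
`I + D = 2(I - x)⁻¹` and `I - D = -2(I - x)⁻¹x` invert the transform,
`x = -(I - D)(I + D)⁻¹`; and by Cayley–Hamilton the inverse of a matrix is a polynomial
in it. -/

open Polynomial

namespace Matrix

variable {ι K : Type*} [Fintype ι] [DecidableEq ι]

theorem pow_card_eq_zero_of_isUpperTriangular [CommRing K] [LinearOrder ι] {M : Matrix ι ι K}
    (hM : M.IsUpperTriangular) (hdiag : ∀ i, M i i = 0) : M ^ Fintype.card ι = 0 := by
  simpa [charpoly_of_isUpperTriangular M hM, hdiag] using aeval_self_charpoly M

theorem exists_aeval_eq_inv [CommRing K] (A : Matrix ι ι K) :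
    ∃ p : K[X], A⁻¹ = aeval A p := by
  by_cases hA : IsUnit A.det
  swap
  · exact ⟨0, by rw [nonsing_inv_apply_not_isUnit A hA, map_zero]⟩
  -- Cayley–Hamilton: `A * q(A) = -c₀`, where `c₀ = ± det A` is the constant term of `χ_A`.
  have hc : IsUnit (A.charpoly.coeff 0) := by
    rw [det_eq_sign_charpoly_coeff] at hA
    exact (IsUnit.mul_iff.mp hA).2
  refine ⟨-C ((hc.unit⁻¹ : Kˣ) : K) * A.charpoly.divX, inv_eq_right_inv ?_⟩
  have h := aeval_self_charpoly A
  rw [← X_mul_divX_add A.charpoly, map_add, map_mul, aeval_X, aeval_C,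
    Algebra.algebraMap_eq_smul_one] at h
  rw [map_mul, map_neg, aeval_C, Algebra.algebraMap_eq_smul_one, neg_mul, smul_mul_assoc, one_mul,
    mul_neg, mul_smul_comm, eq_neg_of_add_eq_zero_left h, smul_neg, neg_neg, smul_smul,
    hc.val_inv_mul, one_smul]

section CommRing

variable [CommRing K] {x : Matrix ι ι K} {m : ℕ}

theorem inv_one_sub_eq_geom_sum (hx : x ^ m = 0) : (1 - x)⁻¹ = ∑ i ∈ Finset.range m, x ^ i :=
  inv_eq_right_inv (by rw [mul_neg_geom_sum, hx, sub_zero])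

theorem isUnit_det_one_sub_of_pow_eq_zero (hx : x ^ m = 0) : IsUnit (1 - x).det :=
  isUnit_det_of_right_inverse (by rw [mul_neg_geom_sum, hx, sub_zero])

theorem inv_one_sub_mul_one_add_eq_one_add_sum (hx : x ^ m = 0) :
    (1 - x)⁻¹ * (1 + x) = 1 + ∑ j ∈ Finset.Icc 1 m, (2 : K) • x ^ j := by
  set S := ∑ i ∈ Finset.range m, x ^ i
  have hS : S - S * x = 1 := by
    rw [← mul_one_sub, geom_sum_mul_neg, hx, sub_zero]
  have hSx : ∑ j ∈ Finset.Icc 1 m, x ^ j = S * x := by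
    rw [Finset.sum_mul, ← Finset.Ico_add_one_right_eq_Icc, Finset.sum_Ico_eq_sum_range]
    simp only [add_tsub_cancel_right, add_comm 1, pow_succ]
  rw [inv_one_sub_eq_geom_sum hx, ← Finset.smul_sum, hSx, mul_one_add, ← hS]
  module

theorem one_add_inv_one_sub_mul_one_add (hx : IsUnit (1 - x).det) :
    1 + (1 - x)⁻¹ * (1 + x) = (2 : K) • (1 - x)⁻¹ := by
  nth_rw 1 [← nonsing_inv_mul _ hx]
  rw [← mul_add, sub_add_add_cancel, ← two_smul K, mul_smul_comm, mul_one]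

theorem one_sub_inv_one_sub_mul_one_add (hx : IsUnit (1 - x).det) :
    1 - (1 - x)⁻¹ * (1 + x) = (-2 : K) • ((1 - x)⁻¹ * x) := by
  nth_rw 1 [← nonsing_inv_mul _ hx]
  rw [← mul_sub, show (1 - x) - (1 + x) = (-2 : K) • x by module, mul_smul_comm]

end CommRing

theorem one_sub_inv_one_sub_mul_one_add_mul_inv [Field K] {x : Matrix ι ι K}
    (hx : IsUnit (1 - x).det) (h2 : (2 : K) ≠ 0) :
    (1 - (1 - x)⁻¹ * (1 + x)) * (1 + (1 - x)⁻¹ * (1 + x))⁻¹ = -x := by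
  have hinv : ((2 : K) • (1 - x)⁻¹)⁻¹ = (2⁻¹ : K) • (1 - x) := by
    refine inv_eq_right_inv ?_
    rw [smul_mul_smul, mul_inv_cancel₀ h2, nonsing_inv_mul _ hx, one_smul]
  have hcomm : x * (1 - x) = (1 - x) * x := by noncomm_ring
  rw [one_add_inv_one_sub_mul_one_add hx, one_sub_inv_one_sub_mul_one_add hx, hinv, smul_mul_smul,
    mul_assoc, hcomm, ← mul_assoc, nonsing_inv_mul _ hx, one_mul]
  field_simp
  module

end Matrix

open Complex

theorem JBlock_zero_pow_self (n : ℕ) : JBlock n 0 ^ n = 0 := by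
  simpa using Matrix.pow_card_eq_zero_of_isUpperTriangular (M := JBlock n 0)
    (fun i j (hji : j < i) => by simp [JBlock, Fin.ext_iff]; omega) (fun i => by simp [JBlock])

theorem Delta_eq_permMatrix_revPerm_mul (n : ℕ) :
    Delta n = (Fin.revPerm : Equiv.Perm (Fin n)).permMatrix ℂ * (1 + I • JBlock n 0) := by
  ext i j
  rw [PEquiv.toMatrix_toPEquiv_mul]
  have := i.isLt
  simp only [Delta, JBlock, of_apply, submatrix_apply, Fin.revPerm_apply, id, Matrix.add_apply,
    one_apply, Matrix.smul_apply, smul_eq_mul, Fin.ext_iff, Fin.val_rev]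
  split_ifs <;> simp <;> omega

theorem conjTranspose_Delta_eq_permMatrix_revPerm_mul (n : ℕ) :
    (Delta n)ᴴ = (Fin.revPerm : Equiv.Perm (Fin n)).permMatrix ℂ * (1 - I • JBlock n 0) := by
  ext i j
  rw [PEquiv.toMatrix_toPEquiv_mul]
  have := i.isLt
  simp only [Delta, JBlock, conjTranspose_apply, of_apply, submatrix_apply, Fin.revPerm_apply, id,
    Matrix.sub_apply, one_apply, Matrix.smul_apply, smul_eq_mul, Fin.ext_iff, Fin.val_rev]
  split_ifs <;> simp <;> omega

section Blocks

variable {k : ℕ} (N : Fin k → ℕ)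

theorem JN_pow_card : JN N ^ Fintype.card (Σ i, Fin (N i)) = 0 := by
  have hle (i : Fin k) : N i ≤ Fintype.card (Σ i, Fin (N i)) := by
    simpa using Finset.single_le_sum (fun j _ => (N j).zero_le) (Finset.mem_univ i)
  rw [JN, ← blockDiagonal'_pow, ← blockDiagonal'_zero]
  congr 1
  funext i
  exact pow_eq_zero_of_le (hle i) (JBlock_zero_pow_self (N i))

/-- The reversal matrix `P_N = P_{n₁} ⊕ ⋯ ⊕ P_{n_k}`. -/
noncomputable def revN : Matrix (Σ i, Fin (N i)) (Σ i, Fin (N i)) ℂ :=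
  blockDiagonal' fun i => (Fin.revPerm : Equiv.Perm (Fin (N i))).permMatrix ℂ

theorem revN_mul_self : revN N * revN N = 1 := by
  rw [revN, ← blockDiagonal'_mul, ← blockDiagonal'_one]
  congr 1
  funext i
  rw [← permMatrix_mul, show Fin.revPerm * Fin.revPerm = 1 from Equiv.ext Fin.rev_rev,
    permMatrix_one, Pi.one_apply]

theorem blockDiagonal'_one_add_smul_JBlock (c : ℂ) :
    blockDiagonal' (fun i => 1 + c • JBlock (N i) 0) = 1 + c • JN N := by
  rw [show (fun i => 1 + c • JBlock (N i) 0) = 1 + c • fun i => JBlock (N i) 0 from rfl,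
    blockDiagonal'_add, blockDiagonal'_one, blockDiagonal'_smul, JN]

theorem DeltaN_eq_revN_mul : DeltaN N = revN N * (1 + I • JN N) := by
  rw [DeltaN, revN, ← blockDiagonal'_one_add_smul_JBlock, ← blockDiagonal'_mul]
  simp only [Delta_eq_permMatrix_revPerm_mul]

theorem conjTranspose_DeltaN_eq_revN_mul : (DeltaN N)ᴴ = revN N * (1 - I • JN N) := by
  rw [DeltaN, revN, blockDiagonal'_conjTranspose, sub_eq_add_neg, ← neg_smul,
    ← blockDiagonal'_one_add_smul_JBlock, ← blockDiagonal'_mul]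
  simp only [conjTranspose_Delta_eq_permMatrix_revPerm_mul, neg_smul, sub_eq_add_neg]

theorem conjTranspose_DeltaN_inv_mul_DeltaN :
    ((DeltaN N)ᴴ)⁻¹ * DeltaN N = (1 - I • JN N)⁻¹ * (1 + I • JN N) := by
  rw [conjTranspose_DeltaN_eq_revN_mul, DeltaN_eq_revN_mul, Matrix.mul_inv_rev, mul_assoc,
    ← mul_assoc _ (revN N), nonsing_inv_mul _ (isUnit_det_of_left_inverse (revN_mul_self N)),
    one_mul]

end Blocks

theorem starCosquare_DeltaN_general {k : ℕ} (N : Fin k → ℕ) :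
    ((DeltaN N)ᴴ)⁻¹ * DeltaN N = (1 - Complex.I • JN N)⁻¹ * (1 + Complex.I • JN N) ∧
    ((DeltaN N)ᴴ)⁻¹ * DeltaN N =
      1 + ∑ j ∈ Finset.Icc 1 (Fintype.card (Σ i, Fin (N i))),
        (2 * Complex.I ^ j) • JN N ^ j ∧
    (∃ p : Polynomial ℂ, ((DeltaN N)ᴴ)⁻¹ * DeltaN N = Polynomial.aeval (JN N) p) ∧
    JN N = Complex.I •
      ((1 - ((DeltaN N)ᴴ)⁻¹ * DeltaN N) * (1 + ((DeltaN N)ᴴ)⁻¹ * DeltaN N)⁻¹) ∧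
    ∃ q : Polynomial ℂ, JN N = Polynomial.aeval (((DeltaN N)ᴴ)⁻¹ * DeltaN N) q := by
  have hD := conjTranspose_DeltaN_inv_mul_DeltaN N
  have hx : (I • JN N) ^ Fintype.card (Σ i, Fin (N i)) = 0 := by
    rw [_root_.smul_pow, JN_pow_card, smul_zero]
  have hJ : JN N =
      I • ((1 - ((DeltaN N)ᴴ)⁻¹ * DeltaN N) *
        (1 + ((DeltaN N)ᴴ)⁻¹ * DeltaN N)⁻¹) := by
    rw [hD, one_sub_inv_one_sub_mul_one_add_mul_inv (isUnit_det_one_sub_of_pow_eq_zero hx)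
      two_ne_zero, smul_neg, smul_smul, I_mul_I, neg_one_smul, neg_neg]
  refine ⟨hD, ?_, ?_, hJ, ?_⟩
  · simp only [hD, inv_one_sub_mul_one_add_eq_one_add_sum hx, _root_.smul_pow, smul_smul]
  · obtain ⟨p, hp⟩ := (1 - I • JN N).exists_aeval_eq_inv
    exact ⟨p.comp (1 - C I * X) * (1 + C I * X), by
      rw [hD, hp]; simp [aeval_comp, Algebra.smul_def]⟩
  · obtain ⟨q, hq⟩ := (1 + ((DeltaN N)ᴴ)⁻¹ * DeltaN N).exists_aeval_eq_inv
    exact ⟨C I * ((1 - X) * q.comp (1 + X)), by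
      rw [hJ, hq]; simp [aeval_comp, Algebra.smul_def]⟩

/-- The *cosquare `D_N = Δ_N⁻* Δ_N` equals `(I - iJ_N)⁻¹(I + iJ_N)
= I + 2iJ_N + 2i²J_N² + ⋯`; it is a polynomial in `J_N`, and
`J_N = i(I - D_N)(I + D_N)⁻¹` is a polynomial in `D_N`. -/
theorem starCosquare_DeltaN {k : ℕ} (N : Fin k → ℕ) (hN : ∀ i, 0 < N i) :
    ((DeltaN N)ᴴ)⁻¹ * DeltaN N = (1 - Complex.I • JN N)⁻¹ * (1 + Complex.I • JN N) ∧
    ((DeltaN N)ᴴ)⁻¹ * DeltaN N =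
      1 + ∑ j ∈ Finset.Icc 1 (Fintype.card (Σ i, Fin (N i))),
        (2 * Complex.I ^ j) • JN N ^ j ∧
    (∃ p : Polynomial ℂ, ((DeltaN N)ᴴ)⁻¹ * DeltaN N = Polynomial.aeval (JN N) p) ∧
    JN N = Complex.I •
      ((1 - ((DeltaN N)ᴴ)⁻¹ * DeltaN N) * (1 + ((DeltaN N)ᴴ)⁻¹ * DeltaN N)⁻¹) ∧
    ∃ q : Polynomial ℂ, JN N = Polynomial.aeval (((DeltaN N)ᴴ)⁻¹ * DeltaN N) q :=
  starCosquare_DeltaN_general N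
end

section
/- Let n be odd and let (A₁, A₂) = ([J_n(0) \ J_n(0)ᵀ], [J_n(-2) \ -J_n(-2)ᵀ]), where [X \ Y] denotes the skew sum [[0,Y],[X,0]]. Then (A₁, A₂) is simultaneously congruent to ([J_n(0) \ J_n(0)ᵀ], [I_n \ -I_n]). -/
open Matrix

/-- The skew sum `[X \ Y] = [[0, Y],[X, 0]]`. -/
def skewSum {n : ℕ} (X Y : Matrix (Fin n) (Fin n) ℂ) :
    Matrix (Fin n ⊕ Fin n) (Fin n ⊕ Fin n) ℂ :=
  Matrix.fromBlocks 0 Y X 0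

/-! A block-diagonal congruence `diag(P, Q)` sends `[X \ Y]` to `[Qᵀ X P \ Pᵀ Y Q]`. If `S`
conjugates `J_n(0)` into `J_n(-2)⁻¹ J_n(0)`, then `P = S`, `Qᵀ = (J_n(-2) S)⁻¹` fixes
`[J_n(0) \ J_n(0)ᵀ]` and turns `[J_n(-2) \ -J_n(-2)ᵀ]` into `[I_n \ -I_n]`. Such an `S` is the
matrix with entries `(j choose i) (-2)^i`: the identity `J_n(0) S = J_n(-2) S J_n(0)` is Pascal's
rule entrywise. -/

lemma transpose_fromBlocks_mul_skewSum_mul_fromBlocks {n : ℕ}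
    (P Q X Y : Matrix (Fin n) (Fin n) ℂ) :
    (fromBlocks P 0 0 Q)ᵀ * skewSum X Y * fromBlocks P 0 0 Q
      = skewSum (Qᵀ * X * P) (Pᵀ * Y * Q) := by
  simp [skewSum, fromBlocks_transpose, fromBlocks_multiply, Matrix.mul_assoc]

lemma exists_congr_skewSum_of_mul_eq {n : ℕ} {X A S : Matrix (Fin n) (Fin n) ℂ}
    (hA : IsUnit A) (hS : IsUnit S) (h : X * S = A * S * X) :
    ∃ R : Matrix (Fin n ⊕ Fin n) (Fin n ⊕ Fin n) ℂ, IsUnit R ∧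
      Rᵀ * skewSum X Xᵀ * R = skewSum X Xᵀ ∧
      Rᵀ * skewSum A (-Aᵀ) * R = skewSum 1 (-1) := by
  set W := A * S
  have hW : IsUnit W.det := (isUnit_iff_isUnit_det W).mp (hA.mul hS)
  have hX : W⁻¹ * X * S = X := by
    rw [Matrix.mul_assoc, h, nonsing_inv_mul_cancel_left (h := hW)]
  have hA1 : W⁻¹ * A * S = 1 := by
    rw [Matrix.mul_assoc, nonsing_inv_mul (h := hW)]
  refine ⟨fromBlocks S 0 0 W⁻¹ᵀ, ?_, ?_, ?_⟩
  · exact isUnit_fromBlocks_zero₁₂.mpr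
      ⟨hS, (isUnit_transpose _).mpr (isUnit_nonsing_inv_iff.mpr (hA.mul hS))⟩
  · rw [transpose_fromBlocks_mul_skewSum_mul_fromBlocks, transpose_transpose, hX]
    congr 1
    simpa [Matrix.mul_assoc] using congrArg transpose hX
  · rw [transpose_fromBlocks_mul_skewSum_mul_fromBlocks, transpose_transpose, hA1]
    congr 1
    simpa [Matrix.mul_assoc] using congrArg (- transpose ·) hA1

lemma JBlock_zero_apply {n : ℕ} (i j : Fin n) :
    JBlock n 0 i j = if (i : ℕ) + 1 = j then 1 else 0 := by
  simp only [JBlock, of_apply]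
  split_ifs with hij <;> first | rfl | (subst hij; omega)

lemma JBlock_eq_smul_one_add (n : ℕ) (μ : ℂ) :
    JBlock n μ = μ • (1 : Matrix (Fin n) (Fin n) ℂ) + JBlock n 0 := by
  ext i j
  simp only [JBlock, of_apply, Matrix.add_apply, Matrix.smul_apply, one_apply, smul_eq_mul]
  split_ifs <;> ring

lemma JBlock_isUpperTriangular (n : ℕ) (μ : ℂ) : (JBlock n μ).IsUpperTriangular :=
  fun i j (hji : j < i) ↦ by
    simp only [JBlock, of_apply]
    rw [if_neg hji.ne', if_neg (by simp only [Fin.lt_def] at hji; omega)]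

lemma det_JBlock (n : ℕ) (μ : ℂ) : (JBlock n μ).det = μ ^ n := by
  rw [det_of_isUpperTriangular (JBlock_isUpperTriangular n μ)]
  simp [JBlock]

lemma JBlock_zero_mul_apply {n : ℕ} (M : Matrix (Fin n) (Fin n) ℂ) (i j : Fin n) :
    (JBlock n 0 * M) i j = if h : (i : ℕ) + 1 < n then M ⟨i + 1, h⟩ j else 0 := by
  rw [mul_apply]
  split_ifs with h
  · rw [Finset.sum_eq_single ⟨i + 1, h⟩ (fun k _ hk ↦ ?_) (by simp), JBlock_zero_apply, if_pos rfl,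
      one_mul]
    rw [JBlock_zero_apply, if_neg (fun hik ↦ hk (Fin.ext hik.symm)), zero_mul]
  · refine Finset.sum_eq_zero fun k _ ↦ ?_
    rw [JBlock_zero_apply, if_neg (by omega), zero_mul]

lemma mul_JBlock_zero_apply {n : ℕ} (M : Matrix (Fin n) (Fin n) ℂ) (i j : Fin n) :
    (M * JBlock n 0) i j = if h : 0 < (j : ℕ) then M i ⟨j - 1, by omega⟩ else 0 := by
  rw [mul_apply]
  split_ifs with h
  · rw [Finset.sum_eq_single ⟨j - 1, by omega⟩ (fun k _ hk ↦ ?_) (by simp), JBlock_zero_apply,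
      if_pos (by simp; omega), mul_one]
    rw [JBlock_zero_apply, if_neg (fun hkj ↦ hk (Fin.ext (by simp; omega))), mul_zero]
  · refine Finset.sum_eq_zero fun k _ ↦ ?_
    rw [JBlock_zero_apply, if_neg (by omega), mul_zero]

def binomialMatrix (n : ℕ) (c : ℂ) : Matrix (Fin n) (Fin n) ℂ :=
  of fun i j ↦ ((j : ℕ).choose i : ℂ) * c ^ (i : ℕ)

lemma binomialMatrix_isUpperTriangular (n : ℕ) (c : ℂ) :
    (binomialMatrix n c).IsUpperTriangular :=
  fun i j (hji : j < i) ↦ by simp [binomialMatrix, Nat.choose_eq_zero_of_lt hji]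

lemma det_binomialMatrix (n : ℕ) (c : ℂ) :
    (binomialMatrix n c).det = ∏ i : Fin n, c ^ (i : ℕ) := by
  rw [det_of_isUpperTriangular (binomialMatrix_isUpperTriangular n c)]
  simp [binomialMatrix]

lemma JBlock_zero_mul_binomialMatrix (n : ℕ) (c : ℂ) :
    JBlock n 0 * binomialMatrix n c = JBlock n c * binomialMatrix n c * JBlock n 0 := by
  rw [JBlock_eq_smul_one_add n c, Matrix.mul_assoc, add_mul, smul_mul_assoc, one_mul]
  ext i j
  simp only [Matrix.add_apply, Matrix.smul_apply, smul_eq_mul, JBlock_zero_mul_apply,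
    mul_JBlock_zero_apply]
  split_ifs
  · obtain ⟨m, hm⟩ : ∃ m, (j : ℕ) = m + 1 := ⟨j - 1, by omega⟩
    simp only [binomialMatrix, of_apply, hm, Nat.add_sub_cancel, Nat.choose_succ_succ]
    push_cast
    ring
  · simp [binomialMatrix, show (j : ℕ) = 0 by omega]
  · simp [binomialMatrix, Nat.choose_eq_zero_of_lt (show (j : ℕ) - 1 < i by omega)]
  · simp

theorem pair_simultaneously_congruent_general (n : ℕ) :
    ∃ R : Matrix (Fin n ⊕ Fin n) (Fin n ⊕ Fin n) ℂ, IsUnit R ∧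
      Rᵀ * skewSum (JBlock n 0) ((JBlock n 0)ᵀ) * R = skewSum (JBlock n 0) ((JBlock n 0)ᵀ) ∧
      Rᵀ * skewSum (JBlock n (-2)) (-(JBlock n (-2))ᵀ) * R = skewSum 1 (-1) := by
  have hJ : IsUnit (JBlock n (-2)) := by
    simp [isUnit_iff_isUnit_det, det_JBlock]
  have hS : IsUnit (binomialMatrix n (-2)) := by
    simp [isUnit_iff_isUnit_det, det_binomialMatrix, Finset.prod_ne_zero_iff]
  exact exists_congr_skewSum_of_mul_eq hJ hS (JBlock_zero_mul_binomialMatrix n (-2))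

/-- For odd `n`, the pair `([J_n(0) \ J_n(0)ᵀ], [J_n(-2) \ -J_n(-2)ᵀ])` is
simultaneously congruent to `([J_n(0) \ J_n(0)ᵀ], [I_n \ -I_n])`. -/
theorem pair_simultaneously_congruent (n : ℕ) (hn : Odd n) :
    ∃ R : Matrix (Fin n ⊕ Fin n) (Fin n ⊕ Fin n) ℂ, IsUnit R ∧
      Rᵀ * skewSum (JBlock n 0) ((JBlock n 0)ᵀ) * R = skewSum (JBlock n 0) ((JBlock n 0)ᵀ) ∧
      Rᵀ * skewSum (JBlock n (-2)) (-(JBlock n (-2))ᵀ) * R = skewSum 1 (-1) :=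
  pair_simultaneously_congruent_general n
end
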